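/- Let A : ℝⁿ → symmetric n×n matrices be Lipschitz with |∇a_{ij}(x)| ≤ η a.e., uniformly elliptic with constant λ, and A(0) = I. Define μ(x) = (A(x)x·x)/|x|². Then there is a constant c₁ = c₁(n,λ) > 0 so that for a.e. x ∈ B_r, |div(A(x)x)·μ(x)^{-1} - n| ≤ c₁ η r. -/

import Mathlib

open MeasureTheory Metric Real Set

noncomputable section

/-- The bilinear form `A(x)ξ·ζ`. -/
def quadA {n : ℕ} (A : EuclideanSpace ℝ (Fin n) → Matrix (Fin n) (Fin n) ℝ)
    (x ξ ζ : EuclideanSpace ℝ (Fin n)) : ℝ :=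
  ∑ i, ∑ j, A x i j * ξ i * ζ j

/-- `μ(x) = A(x)x·x / |x|²`. -/
def muA {n : ℕ} (A : EuclideanSpace ℝ (Fin n) → Matrix (Fin n) (Fin n) ℝ)
    (x : EuclideanSpace ℝ (Fin n)) : ℝ :=
  quadA A x x x / ‖x‖ ^ 2

/-- The vector field `x ↦ A(x)x`. -/
def Ax {n : ℕ} (A : EuclideanSpace ℝ (Fin n) → Matrix (Fin n) (Fin n) ℝ)
    (x : EuclideanSpace ℝ (Fin n)) : EuclideanSpace ℝ (Fin n) :=
  WithLp.toLp 2 (fun i => ∑ j, A x i j * x j)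

/-- The divergence of a vector field. -/
def divg {n : ℕ} (F : EuclideanSpace ℝ (Fin n) → EuclideanSpace ℝ (Fin n))
    (x : EuclideanSpace ℝ (Fin n)) : ℝ :=
  ∑ i, fderiv ℝ (fun y => F y i) x (EuclideanSpace.single i 1)

lemma coord_abs_le {n : ℕ} (x : EuclideanSpace ℝ (Fin n)) (i : Fin n) : |x i| ≤ ‖x‖ := by
  have h : ‖x‖ = Real.sqrt (∑ j, ‖x j‖ ^ 2) := EuclideanSpace.norm_eq x
  rw [h]
  have h1 : |x i| = Real.sqrt (‖x i‖ ^ 2) := by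
    rw [Real.sqrt_sq_eq_abs]; simp
  rw [h1]
  apply Real.sqrt_le_sqrt
  exact Finset.single_le_sum (f := fun j => ‖x j‖ ^ 2) (fun j _ => by positivity) (Finset.mem_univ i)

lemma normsq_eq {n : ℕ} (x : EuclideanSpace ℝ (Fin n)) : ‖x‖ ^ 2 = ∑ i, x i * x i := by
  rw [← real_inner_self_eq_norm_sq]
  rw [real_inner_self_eq_norm_sq, EuclideanSpace.norm_eq, Real.sq_sqrt (by positivity)]
  simp [Real.norm_eq_abs, sq_abs, sq]

lemma divg_Ax_eq {n : ℕ} (A : EuclideanSpace ℝ (Fin n) → Matrix (Fin n) (Fin n) ℝ)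
    (x : EuclideanSpace ℝ (Fin n))
    (hd : ∀ i j, DifferentiableAt ℝ (fun y => A y i j) x) :
    divg (Ax A) x = (∑ i, A x i i) +
      ∑ i, ∑ j, x j * (fderiv ℝ (fun y => A y i j) x (EuclideanSpace.single i 1)) := by
  unfold divg Ax
  simp only [WithLp.ofLp_toLp]
  have key : ∀ i : Fin n, fderiv ℝ (fun y => ∑ j, A y i j * y j) x (EuclideanSpace.single i 1)
      = A x i i + ∑ j, x j * (fderiv ℝ (fun y => A y i j) x (EuclideanSpace.single i 1)) := by
    intro i
    have hproj : ∀ j : Fin n, DifferentiableAt ℝ (fun y : EuclideanSpace ℝ (Fin n) => y j) x :=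
      fun j => (EuclideanSpace.proj (𝕜 := ℝ) j).differentiableAt
    have hterm : ∀ j : Fin n, DifferentiableAt ℝ (fun y => A y i j * y j) x :=
      fun j => (hd i j).mul (hproj j)
    rw [fderiv_fun_sum (fun j _ => hterm j)]
    rw [ContinuousLinearMap.sum_apply]
    have hj : ∀ j : Fin n, (fderiv ℝ (fun y => A y i j * y j) x) (EuclideanSpace.single i 1)
        = A x i j * (EuclideanSpace.single i (1:ℝ) j)
          + x j * (fderiv ℝ (fun y => A y i j) x (EuclideanSpace.single i 1)) := by
      intro j
      rw [fderiv_fun_mul (hd i j) (hproj j)]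
      have hfp : fderiv ℝ (fun y : EuclideanSpace ℝ (Fin n) => y j) x
          = EuclideanSpace.proj (𝕜 := ℝ) j := (EuclideanSpace.proj (𝕜 := ℝ) j).fderiv
      simp [hfp]
    simp_rw [hj, Finset.sum_add_distrib]
    congr 1
    have : ∀ j : Fin n, EuclideanSpace.single i (1:ℝ) j = if j = i then 1 else 0 := by
      intro j; simp [EuclideanSpace.single_apply]
    simp_rw [this, mul_ite, mul_one, mul_zero, Finset.sum_ite_eq' Finset.univ i]
    simp
  simp_rw [key, Finset.sum_add_distrib]

/-- `|div(A(x)x) μ(x)⁻¹ - n| ≤ c₁ η r` a.e. on `B_r`. -/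
theorem div_Ax_estimate (n : ℕ) (lam : ℝ) (hlam : 0 < lam) :
    ∃ c₁ : ℝ, 0 < c₁ ∧
      ∀ (A : EuclideanSpace ℝ (Fin n) → Matrix (Fin n) (Fin n) ℝ) (η : ℝ), 0 < η →
        (∀ x i j, A x i j = A x j i) →
        (∀ x ξ, lam * ‖ξ‖ ^ 2 ≤ quadA A x ξ ξ) →
        (∀ x ξ ζ, |quadA A x ξ ζ| ≤ lam⁻¹ * ‖ξ‖ * ‖ζ‖) →
        (∀ i j, LipschitzWith (Real.toNNReal η) (fun x => A x i j)) →
        A 0 = 1 →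
        ∀ r : ℝ, 0 < r →
          ∀ᵐ x ∂(volume.restrict (Metric.ball (0 : EuclideanSpace ℝ (Fin n)) r)),
            |divg (Ax A) x * (muA A x)⁻¹ - n| ≤ c₁ * η * r := by
  refine ⟨((n:ℝ)^3 + n^2 + n) / lam + 1, by positivity, ?_⟩
  intro A η hη hsym hell hbd hlip hA0 r hr
  rcases Nat.eq_zero_or_pos n with hn | hn
  · subst hn
    filter_upwards with x
    have h1 : divg (Ax A) x = 0 := by simp [divg]
    have h2 : muA A x = 0 := by simp [muA, quadA]
    rw [h1, h2]
    simp
    positivity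
  -- main case n > 0
  haveI : Nonempty (Fin n) := ⟨⟨0, hn⟩⟩
  -- a.e. differentiability of all entries
  have hdiff : ∀ᵐ x ∂(volume : Measure (EuclideanSpace ℝ (Fin n))),
      ∀ i j, DifferentiableAt ℝ (fun y => A y i j) x := by
    rw [MeasureTheory.ae_all_iff]
    intro i
    rw [MeasureTheory.ae_all_iff]
    intro j
    exact (hlip i j).ae_differentiableAt
  have hzero : ∀ᵐ x ∂(volume : Measure (EuclideanSpace ℝ (Fin n))),
      x ≠ (0 : EuclideanSpace ℝ (Fin n)) := by
    have : volume ({(0 : EuclideanSpace ℝ (Fin n))} : Set (EuclideanSpace ℝ (Fin n))) = 0 :=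
      measure_singleton 0
    rw [MeasureTheory.ae_iff]
    convert this using 2
    ext y; simp
  filter_upwards [MeasureTheory.ae_restrict_of_ae hdiff, MeasureTheory.ae_restrict_of_ae hzero,
    MeasureTheory.ae_restrict_mem measurableSet_ball] with x hd hx0 hxball
  -- basic facts
  have hxr : ‖x‖ < r := by simpa [mem_ball, dist_eq_norm] using hxball
  have hxpos : (0:ℝ) < ‖x‖ := norm_pos_iff.2 hx0
  have hηeq : (Real.toNNReal η : ℝ) = η := Real.coe_toNNReal _ hη.le
  -- entry bound: |A x i j - (if i = j then 1 else 0)| ≤ η ‖x‖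
  have hentry : ∀ i j, |A x i j - (if i = j then 1 else 0)| ≤ η * ‖x‖ := by
    intro i j
    have := (hlip i j).dist_le_mul x 0
    rw [hηeq] at this
    have h0 : A 0 i j = if i = j then 1 else 0 := by rw [hA0]; simp [Matrix.one_apply]
    simpa [Real.dist_eq, h0, dist_eq_norm] using this
  -- gradient bound
  have hgrad : ∀ i j, |fderiv ℝ (fun y => A y i j) x (EuclideanSpace.single i 1)| ≤ η := by
    intro i j
    have h1 : ‖fderiv ℝ (fun y => A y i j) x‖ ≤ η := by
      have := norm_fderiv_le_of_lipschitz ℝ (hlip i j) (x₀ := x)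
      rwa [hηeq] at this
    calc |fderiv ℝ (fun y => A y i j) x (EuclideanSpace.single i 1)|
        ≤ ‖fderiv ℝ (fun y => A y i j) x‖ * ‖EuclideanSpace.single i (1:ℝ)‖ :=
          (fderiv ℝ (fun y => A y i j) x).le_opNorm _
      _ ≤ η * 1 := by
          apply mul_le_mul h1 _ (norm_nonneg _) hη.le
          rw [EuclideanSpace.norm_single]; simp
      _ = η := mul_one η
  -- trace bound
  have htrace : |(∑ i, A x i i) - n| ≤ n * (η * ‖x‖) := by
    have : (∑ i, A x i i) - (n:ℝ) = ∑ i, (A x i i - 1) := by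
      rw [Finset.sum_sub_distrib]; simp
    rw [this]
    calc |∑ i, (A x i i - 1)| ≤ ∑ i, |A x i i - 1| := Finset.abs_sum_le_sum_abs _ _
      _ ≤ ∑ _i : Fin n, η * ‖x‖ := by
          apply Finset.sum_le_sum
          intro i _
          have := hentry i i
          simpa using this
      _ = n * (η * ‖x‖) := by simp [mul_comm]
  -- second term bound
  have hT2 : |∑ i, ∑ j, x j * (fderiv ℝ (fun y => A y i j) x (EuclideanSpace.single i 1))|
      ≤ (n:ℝ)^2 * (η * ‖x‖) := by
    calc |∑ i, ∑ j, x j * (fderiv ℝ (fun y => A y i j) x (EuclideanSpace.single i 1))|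
        ≤ ∑ i, |∑ j, x j * (fderiv ℝ (fun y => A y i j) x (EuclideanSpace.single i 1))| :=
          Finset.abs_sum_le_sum_abs _ _
      _ ≤ ∑ _i : Fin n, (n:ℝ) * (η * ‖x‖) := by
          apply Finset.sum_le_sum
          intro i _
          calc |∑ j, x j * (fderiv ℝ (fun y => A y i j) x (EuclideanSpace.single i 1))|
              ≤ ∑ j, |x j * (fderiv ℝ (fun y => A y i j) x (EuclideanSpace.single i 1))| :=
                Finset.abs_sum_le_sum_abs _ _
            _ ≤ ∑ _j : Fin n, ‖x‖ * η := by
                apply Finset.sum_le_sum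
                intro j _
                rw [abs_mul]
                exact mul_le_mul (coord_abs_le x j) (hgrad i j) (abs_nonneg _) (norm_nonneg _)
            _ = (n:ℝ) * (η * ‖x‖) := by
                rw [Finset.sum_const, Finset.card_univ, Fintype.card_fin, nsmul_eq_mul]; ring
      _ = (n:ℝ)^2 * (η * ‖x‖) := by
          rw [Finset.sum_const, Finset.card_univ, Fintype.card_fin, nsmul_eq_mul]; ring
  -- quadratic form close to ‖x‖²
  have hdelta : ∀ i : Fin n, ∑ j, (if i = j then (1:ℝ) else 0) * x i * x j = x i * x i := by
    intro i
    simp_rw [ite_mul, one_mul, zero_mul, Finset.sum_ite_eq]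
    simp
  have hquad : |quadA A x x x - ‖x‖ ^ 2| ≤ (n:ℝ)^2 * (η * ‖x‖) * ‖x‖^2 := by
    have heq : quadA A x x x - ‖x‖ ^ 2
        = ∑ i, ∑ j, (A x i j - (if i = j then 1 else 0)) * x i * x j := by
      unfold quadA
      rw [normsq_eq, ← Finset.sum_sub_distrib]
      refine Finset.sum_congr rfl fun i _ => ?_
      rw [← hdelta i, ← Finset.sum_sub_distrib]
      refine Finset.sum_congr rfl fun j _ => ?_
      ring
    rw [heq]
    calc |∑ i, ∑ j, (A x i j - (if i = j then 1 else 0)) * x i * x j|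
        ≤ ∑ i, |∑ j, (A x i j - (if i = j then 1 else 0)) * x i * x j| :=
          Finset.abs_sum_le_sum_abs _ _
      _ ≤ ∑ _i : Fin n, (n:ℝ) * (η * ‖x‖ * (‖x‖ * ‖x‖)) := by
          refine Finset.sum_le_sum fun i _ => ?_
          calc |∑ j, (A x i j - (if i = j then 1 else 0)) * x i * x j|
              ≤ ∑ j, |(A x i j - (if i = j then 1 else 0)) * x i * x j| :=
                Finset.abs_sum_le_sum_abs _ _
            _ ≤ ∑ _j : Fin n, η * ‖x‖ * (‖x‖ * ‖x‖) := by
                refine Finset.sum_le_sum fun j _ => ?_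
                rw [abs_mul, abs_mul]
                have h1 := hentry i j
                have h2 := coord_abs_le x i
                have h3 := coord_abs_le x j
                have := mul_le_mul (mul_le_mul h1 h2 (abs_nonneg _) (by positivity)) h3
                  (abs_nonneg _) (by positivity)
                linarith [this]
            _ = (n:ℝ) * (η * ‖x‖ * (‖x‖ * ‖x‖)) := by
                rw [Finset.sum_const, Finset.card_univ, Fintype.card_fin, nsmul_eq_mul]
      _ = (n:ℝ)^2 * (η * ‖x‖) * ‖x‖^2 := by
          rw [Finset.sum_const, Finset.card_univ, Fintype.card_fin, nsmul_eq_mul]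
          ring
  -- μ bounds
  have hx2 : (0:ℝ) < ‖x‖ ^ 2 := by positivity
  have hμlam : lam ≤ muA A x := by
    rw [muA, le_div_iff₀ hx2]
    exact hell x x
  have hμpos : 0 < muA A x := lt_of_lt_of_le hlam hμlam
  have hμ1 : |muA A x - 1| ≤ (n:ℝ)^2 * (η * ‖x‖) := by
    have : muA A x - 1 = (quadA A x x x - ‖x‖ ^ 2) / ‖x‖ ^ 2 := by
      rw [muA]; field_simp
    rw [this, abs_div, abs_of_pos hx2, div_le_iff₀ hx2]
    exact hquad
  -- put everything together
  have hdivg := divg_Ax_eq A x hd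
  have hkey : |divg (Ax A) x - (n:ℝ) * muA A x| ≤ ((n:ℝ)^3 + n^2 + n) * (η * ‖x‖) := by
    have h1 : divg (Ax A) x - (n:ℝ) * muA A x
        = ((∑ i, A x i i) - n)
          + (∑ i, ∑ j, x j * (fderiv ℝ (fun y => A y i j) x (EuclideanSpace.single i 1)))
          + (n:ℝ) * (1 - muA A x) := by
      rw [hdivg]; ring
    rw [h1]
    have h2 : |(n:ℝ) * (1 - muA A x)| ≤ (n:ℝ) * ((n:ℝ)^2 * (η * ‖x‖)) := by
      rw [abs_mul, Nat.abs_cast, abs_sub_comm]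
      exact mul_le_mul_of_nonneg_left hμ1 (Nat.cast_nonneg n)
    calc |((∑ i, A x i i) - n)
          + (∑ i, ∑ j, x j * (fderiv ℝ (fun y => A y i j) x (EuclideanSpace.single i 1)))
          + (n:ℝ) * (1 - muA A x)|
        ≤ |((∑ i, A x i i) - n)
          + (∑ i, ∑ j, x j * (fderiv ℝ (fun y => A y i j) x (EuclideanSpace.single i 1)))|
          + |(n:ℝ) * (1 - muA A x)| := abs_add_le _ _
      _ ≤ |(∑ i, A x i i) - n|
          + |∑ i, ∑ j, x j * (fderiv ℝ (fun y => A y i j) x (EuclideanSpace.single i 1))|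
          + |(n:ℝ) * (1 - muA A x)| := by gcongr; exact abs_add_le _ _
      _ ≤ (n:ℝ) * (η * ‖x‖) + (n:ℝ)^2 * (η * ‖x‖) + (n:ℝ) * ((n:ℝ)^2 * (η * ‖x‖)) :=
          add_le_add (add_le_add htrace hT2) h2
      _ = ((n:ℝ)^3 + n^2 + n) * (η * ‖x‖) := by ring
  have hfinal : divg (Ax A) x * (muA A x)⁻¹ - (n:ℝ)
      = (divg (Ax A) x - (n:ℝ) * muA A x) * (muA A x)⁻¹ := by
    field_simp
  rw [hfinal, abs_mul, abs_of_pos (inv_pos.2 hμpos)]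
  have hinv : (muA A x)⁻¹ ≤ lam⁻¹ := by
    exact inv_anti₀ hlam hμlam
  calc |divg (Ax A) x - (n:ℝ) * muA A x| * (muA A x)⁻¹
      ≤ ((n:ℝ)^3 + n^2 + n) * (η * ‖x‖) * lam⁻¹ := by
        apply mul_le_mul hkey hinv (inv_nonneg.2 hμpos.le) (by positivity)
    _ ≤ ((n:ℝ)^3 + n^2 + n) * (η * r) * lam⁻¹ := by
        have : (0:ℝ) ≤ ((n:ℝ)^3 + n^2 + n) := by positivity
        gcongr
    _ = (((n:ℝ)^3 + n^2 + n) / lam) * η * r := by field_simp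
    _ ≤ (((n:ℝ)^3 + n^2 + n) / lam + 1) * η * r := by
        have : (0:ℝ) < η * r := by positivity
        nlinarith
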